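/- arXiv:2003.12167 — 4 statements merged into one kernel-verified Lean document; each statement's English description precedes it below -/
import Mathlib

section
/- Let N ≥ 1, α ∈ (0,2), λ ∈ ℝ, and let p: ℝ^N → (1,∞) be measurable with 1 < p⁻ ≤ p(x) ≤ p⁺ < ∞ for a.e. x. Let u be a weak solution to (−Δ)^{α/2}u + λΔu ≥ |u|^{p(x)} on ℝ^N. Then there exists a constant C > 0, depending only on p⁻, p⁺ and λ, such that for every φ ∈ H²(ℝ^N) with φ(x) > 0 for all x: ∫_{ℝ^N} |u(x)|^{p(x)} φ(x) dx ≤ C ( ∫_{ℝ^N} φ(x)^{−1/(p(x)−1)} |(−Δ)^{α/2}φ(x)|^{p(x)/(p(x)−1)} dx + |λ| ∫_{ℝ^N} φ(x)^{−1/(p(x)−1)} |Δφ(x)|^{p(x)/(p(x)−1)} dx ). -/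
/-!
Testing the weak inequality with `φ` bounds `∫ |u|^p φ` by
`∫ u (-Δ)^{α/2}φ + λ ∫ u Δφ`. Each integrand is estimated pointwise by Young's inequality
with the variable exponent `p(x)` and a small weight `ε`:
`|u g| ≤ ε |u|^p φ + C_ε φ^{-1/(p-1)} |g|^{p/(p-1)}`, where `C_ε = ε^{-1/(p⁻-1)}` is uniform
in `x` because `p ≥ p⁻ > 1`. For `ε (1 + |λ|) = 1/2` the `|u|^p φ`-terms add up to half of the
left-hand side, which is finite by the weak inequality itself and is therefore absorbed.
-/

open MeasureTheory FourierTransform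

/-- The fractional Laplacian `(-Δ)^s` of a real-valued function on `ℝ^N`, defined via the
Fourier transform: `(-Δ)^s f = 𝓕⁻(‖ξ‖^(2s) • 𝓕 f)`. -/
noncomputable def fracLap {N : ℕ} (s : ℝ) (f : EuclideanSpace ℝ (Fin N) → ℝ) :
    EuclideanSpace ℝ (Fin N) → ℝ :=
  fun x => (𝓕⁻
    (fun ξ => (((‖ξ‖ ^ (2 * s) : ℝ) : ℂ)) *
      𝓕 (fun y => ((f y : ℝ) : ℂ)) ξ) x).re

/-- The Laplacian `Δ`, realized through the Fourier definition as `-(-Δ)^1`. -/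
noncomputable def lap {N : ℕ} (f : EuclideanSpace ℝ (Fin N) → ℝ) :
    EuclideanSpace ℝ (Fin N) → ℝ :=
  fun x => -(fracLap 1 f x)

/-- Membership in the Sobolev space `H²(ℝ^N)`: `f ∈ L²` and
`ξ ↦ (1 + ‖ξ‖²) 𝓕f(ξ) ∈ L²`. -/
def memH2 {N : ℕ} (f : EuclideanSpace ℝ (Fin N) → ℝ) : Prop :=
  MemLp f 2 (volume : Measure (EuclideanSpace ℝ (Fin N))) ∧
  MemLp (fun ξ : EuclideanSpace ℝ (Fin N) =>
    (((1 + ‖ξ‖ ^ 2 : ℝ) : ℂ)) * 𝓕 (fun y => ((f y : ℝ) : ℂ)) ξ) 2 volume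

open scoped ENNReal

theorem Real.continuous_fourier {V E : Type*} [NormedAddCommGroup V] [InnerProductSpace ℝ V]
    [MeasurableSpace V] [BorelSpace V] [FiniteDimensional ℝ V]
    [NormedAddCommGroup E] [NormedSpace ℂ E] (f : V → E) : Continuous (𝓕 f) := by
  by_cases hf : Integrable f
  · exact VectorFourier.fourierIntegral_continuous Real.continuous_fourierChar
      (innerSL ℝ).continuous₂ hf
  · -- outside `L¹` the Fourier integral takes the junk value `0`
    have : 𝓕 f = 0 := funext fun w =>
      integral_undef (mt (Real.fourierIntegral_convergent_iff w).1 hf)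
    rw [this]
    exact continuous_const

theorem Real.continuous_fourierInv {V E : Type*} [NormedAddCommGroup V]
    [InnerProductSpace ℝ V] [MeasurableSpace V] [BorelSpace V] [FiniteDimensional ℝ V]
    [NormedAddCommGroup E] [NormedSpace ℂ E] (f : V → E) : Continuous (𝓕⁻ f) := by
  rw [Real.fourierInv_eq_fourier_comp_neg]
  exact Real.continuous_fourier _

theorem continuous_fracLap {N : ℕ} (s : ℝ) (f : EuclideanSpace ℝ (Fin N) → ℝ) :
    Continuous (fracLap s f) :=
  Complex.continuous_re.comp (Real.continuous_fourierInv _)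

theorem continuous_lap {N : ℕ} (f : EuclideanSpace ℝ (Fin N) → ℝ) : Continuous (lap f) :=
  (continuous_fracLap 1 f).neg

theorem ENNReal.le_two_mul_of_le_half_mul_add {a b : ℝ≥0∞} (ha : a ≠ ∞)
    (h : a ≤ 2⁻¹ * a + b) : a ≤ 2 * b := by
  have hhalf : 2⁻¹ * a ≤ b := by
    have hfin : 2⁻¹ * a ≠ ∞ := ENNReal.mul_ne_top (ENNReal.inv_ne_top.2 two_ne_zero) ha
    refine ENNReal.le_of_add_le_add_left hfin ?_
    rwa [← add_mul, ENNReal.inv_two_add_inv_two, one_mul]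
  calc a = 2 * (2⁻¹ * a) := by
        rw [← mul_assoc, ENNReal.mul_inv_cancel two_ne_zero ENNReal.ofNat_ne_top, one_mul]
    _ ≤ 2 * b := by gcongr

/-- Young's inequality for `δ c^{1/p} |a|` and `δ⁻¹ c^{-1/p} |b|`. -/
theorem abs_mul_le_rpow_weighted {p a b c δ : ℝ} (hp : 1 < p) (hc : 0 < c) (hδ : 0 < δ) :
    |a * b| ≤ δ ^ p * (|a| ^ p * c) +
      δ ^ (-(p / (p - 1))) * (c ^ (-1 / (p - 1)) * |b| ^ (p / (p - 1))) := by
  have hp0 : 0 < p := one_pos.trans hp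
  have hp1 : 0 < p - 1 := sub_pos.2 hp
  set q := p / (p - 1) with hq
  have hq1 : 1 ≤ q := by rw [hq, le_div_iff₀ hp1]; linarith
  set X := δ * c ^ (1 / p) * |a|
  set Y := δ⁻¹ * c ^ (-(1 / p)) * |b|
  have hXY : |a * b| = X * Y := by
    rw [abs_mul, show X * Y = δ * δ⁻¹ * (c ^ (1 / p) * c ^ (-(1 / p))) * (|a| * |b|) by ring,
      mul_inv_cancel₀ hδ.ne', ← Real.rpow_add hc, add_neg_cancel, Real.rpow_zero, one_mul, one_mul]
  have hX : X ^ p = δ ^ p * (|a| ^ p * c) := by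
    rw [Real.mul_rpow (by positivity) (abs_nonneg a), Real.mul_rpow hδ.le (by positivity),
      ← Real.rpow_mul hc.le, one_div_mul_cancel hp0.ne', Real.rpow_one]
    ring
  have hY : Y ^ q = δ ^ (-q) * (c ^ (-1 / (p - 1)) * |b| ^ q) := by
    have hexp : -(1 / p) * q = -1 / (p - 1) := by rw [hq]; field_simp
    rw [Real.mul_rpow (by positivity) (abs_nonneg b), Real.mul_rpow (by positivity) (by positivity),
      Real.inv_rpow hδ.le, ← Real.rpow_neg hδ.le, ← Real.rpow_mul hc.le, hexp]
    ring
  calc |a * b| = X * Y := hXY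
    _ ≤ X ^ p / p + Y ^ q / q :=
      Real.young_inequality_of_nonneg (by positivity) (by positivity)
        (Real.HolderConjugate.conjExponent hp)
    _ ≤ X ^ p + Y ^ q := by
      gcongr
      · exact div_le_self (by positivity) hp.le
      · exact div_le_self (by positivity) hq1
    _ = _ := by rw [hX, hY]

theorem abs_mul_le_eps_mul_add {p₀ p a b c ε : ℝ} (hp₀ : 1 < p₀) (hp : p₀ ≤ p) (hc : 0 < c)
    (hε : 0 < ε) (hε₁ : ε ≤ 1) :
    |a * b| ≤ ε * (|a| ^ p * c) +
      ε ^ (-1 / (p₀ - 1)) * (c ^ (-1 / (p - 1)) * |b| ^ (p / (p - 1))) := by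
  have hp₀0 : 0 < p₀ := one_pos.trans hp₀
  have hp₀1 : 0 < p₀ - 1 := sub_pos.2 hp₀
  have hp1 : 0 < p - 1 := by linarith
  set δ := ε ^ (1 / p₀)
  have hδ : 0 < δ := Real.rpow_pos_of_pos hε _
  have hδ₁ : δ ≤ 1 := Real.rpow_le_one hε.le hε₁ (by positivity)
  have hδp : δ ^ p ≤ ε := by
    calc δ ^ p ≤ δ ^ p₀ := Real.rpow_le_rpow_of_exponent_ge hδ hδ₁ hp
      _ = ε := by rw [← Real.rpow_mul hε.le, one_div_mul_cancel hp₀0.ne', Real.rpow_one]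
  have hδq : δ ^ (-(p / (p - 1))) ≤ ε ^ (-1 / (p₀ - 1)) := by
    have hq : p / (p - 1) * (p₀ - 1) ≤ p₀ := by
      rw [div_mul_eq_mul_div, div_le_iff₀ hp1]; nlinarith
    rw [← Real.rpow_mul hε.le]
    refine Real.rpow_le_rpow_of_exponent_ge hε hε₁ ?_
    rw [div_le_iff₀ hp₀1]
    calc -1 = 1 / p₀ * -p₀ := by field_simp
      _ ≤ 1 / p₀ * -(p / (p - 1) * (p₀ - 1)) := by gcongr
      _ = 1 / p₀ * -(p / (p - 1)) * (p₀ - 1) := by ring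
  refine (abs_mul_le_rpow_weighted (hp₀.trans_le hp) hc hδ).trans ?_
  gcongr

section Integrated

variable {X : Type*} [MeasurableSpace X] {μ : Measure X}

theorem lintegral_enorm_mul_le_eps_mul_add {p u v φ : X → ℝ} {p₀ ε : ℝ} (hp₀ : 1 < p₀)
    (hp : ∀ᵐ x ∂μ, p₀ ≤ p x) (hpm : AEMeasurable p μ) (hvm : AEMeasurable v μ)
    (hφm : AEMeasurable φ μ) (hφ : ∀ᵐ x ∂μ, 0 < φ x) (hε : 0 < ε) (hε₁ : ε ≤ 1) :
    ∫⁻ x, ‖u x * v x‖ₑ ∂μ ≤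
      ENNReal.ofReal ε * ∫⁻ x, ENNReal.ofReal (|u x| ^ p x * φ x) ∂μ +
        ENNReal.ofReal (ε ^ (-1 / (p₀ - 1))) *
          ∫⁻ x, ENNReal.ofReal (φ x ^ (-1 / (p x - 1)) * |v x| ^ (p x / (p x - 1))) ∂μ := by
  have hweight : AEMeasurable
      (fun x => ENNReal.ofReal (φ x ^ (-1 / (p x - 1)) * |v x| ^ (p x / (p x - 1)))) μ := by
    fun_prop
  rw [← lintegral_const_mul' _ _ ENNReal.ofReal_ne_top,
    ← lintegral_const_mul' _ _ ENNReal.ofReal_ne_top,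
    ← lintegral_add_right' _ (hweight.const_mul _)]
  refine lintegral_mono_ae ?_
  filter_upwards [hp, hφ] with x hpx hφx
  rw [Real.enorm_eq_ofReal_abs, ← ENNReal.ofReal_mul hε.le, ← ENNReal.ofReal_mul (by positivity),
    ← ENNReal.ofReal_add (by positivity) (by positivity)]
  exact ENNReal.ofReal_le_ofReal (abs_mul_le_eps_mul_add hp₀ hpx hφx hε hε₁)

theorem ofReal_integral_add_mul_le (f g : X → ℝ) (c : ℝ) :
    ENNReal.ofReal ((∫ x, f x ∂μ) + c * ∫ x, g x ∂μ) ≤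
      ∫⁻ x, ‖f x‖ₑ ∂μ + ENNReal.ofReal |c| * ∫⁻ x, ‖g x‖ₑ ∂μ := by
  calc ENNReal.ofReal ((∫ x, f x ∂μ) + c * ∫ x, g x ∂μ)
      ≤ ENNReal.ofReal (|∫ x, f x ∂μ| + |c| * |∫ x, g x ∂μ|) := by
        refine ENNReal.ofReal_le_ofReal ?_
        rw [← abs_mul]
        exact (le_abs_self _).trans (abs_add_le _ _)
    _ = ‖∫ x, f x ∂μ‖ₑ + ENNReal.ofReal |c| * ‖∫ x, g x ∂μ‖ₑ := by
        rw [Real.enorm_eq_ofReal_abs, Real.enorm_eq_ofReal_abs, ← ENNReal.ofReal_mul (abs_nonneg c),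
          ENNReal.ofReal_add (abs_nonneg _) (by positivity)]
    _ ≤ ∫⁻ x, ‖f x‖ₑ ∂μ + ENNReal.ofReal |c| * ∫⁻ x, ‖g x‖ₑ ∂μ := by
        gcongr <;> exact enorm_integral_le_lintegral_enorm _

end Integrated

theorem weak_solution_capacity_bound_general
    (N : ℕ) (α : ℝ) (lam : ℝ)
    (p : EuclideanSpace ℝ (Fin N) → ℝ) (hpmeas : Measurable p)
    (pminus pplus : ℝ) (hp1 : 1 < pminus)
    (hpbd : ∀ᵐ x : EuclideanSpace ℝ (Fin N) ∂(volume : Measure (EuclideanSpace ℝ (Fin N))),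
      pminus ≤ p x ∧ p x ≤ pplus)
    (u : EuclideanSpace ℝ (Fin N) → ℝ)
    (hweak : ∀ φ : EuclideanSpace ℝ (Fin N) → ℝ, memH2 φ → (∀ x, 0 ≤ φ x) →
      (∫⁻ x : EuclideanSpace ℝ (Fin N), ENNReal.ofReal (|u x| ^ (p x) * φ x)) ≤
        ENNReal.ofReal ((∫ x : EuclideanSpace ℝ (Fin N), u x * fracLap (α / 2) φ x) +
          lam * ∫ x : EuclideanSpace ℝ (Fin N), u x * lap φ x)) :
    ∃ C : ℝ, 0 < C ∧
      ∀ φ : EuclideanSpace ℝ (Fin N) → ℝ, memH2 φ → (∀ x, 0 < φ x) →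
        (∫⁻ x : EuclideanSpace ℝ (Fin N), ENNReal.ofReal (|u x| ^ (p x) * φ x)) ≤
          ENNReal.ofReal C *
            ((∫⁻ x : EuclideanSpace ℝ (Fin N), ENNReal.ofReal
                (φ x ^ (-1 / (p x - 1)) * |fracLap (α / 2) φ x| ^ (p x / (p x - 1)))) +
              ENNReal.ofReal |lam| *
              (∫⁻ x : EuclideanSpace ℝ (Fin N), ENNReal.ofReal
                (φ x ^ (-1 / (p x - 1)) * |lap φ x| ^ (p x / (p x - 1))))) := by
  set ε := (2 * (1 + |lam|))⁻¹
  have hε : 0 < ε := by positivity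
  have hε₁ : ε ≤ 1 := inv_le_one_of_one_le₀ (by linarith [abs_nonneg lam])
  have hhalf : ENNReal.ofReal ε + ENNReal.ofReal |lam| * ENNReal.ofReal ε = 2⁻¹ := by
    rw [← ENNReal.ofReal_mul (abs_nonneg lam), ← ENNReal.ofReal_add hε.le (by positivity),
      ← ENNReal.ofReal_ofNat 2, ← ENNReal.ofReal_inv_of_pos two_pos]
    congr 1
    linear_combination (2 : ℝ)⁻¹ * inv_mul_cancel₀ (by positivity : 2 * (1 + |lam|) ≠ 0)
  refine ⟨2 * ε ^ (-1 / (pminus - 1)), by positivity, fun φ hφ hφpos => ?_⟩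
  have hyoung (v : EuclideanSpace ℝ (Fin N) → ℝ) (hv : Continuous v) :=
    lintegral_enorm_mul_le_eps_mul_add (u := u) hp1 (hpbd.mono fun _ hx => hx.1)
      hpmeas.aemeasurable hv.aemeasurable hφ.1.aestronglyMeasurable.aemeasurable
      (ae_of_all _ hφpos) hε hε₁
  have hweakφ := hweak φ hφ fun x => (hφpos x).le
  set I := ∫⁻ x, ENNReal.ofReal (|u x| ^ (p x) * φ x)
  rw [ENNReal.ofReal_mul zero_le_two, ENNReal.ofReal_ofNat, mul_assoc]
  refine ENNReal.le_two_mul_of_le_half_mul_add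
    (ne_top_of_le_ne_top ENNReal.ofReal_ne_top hweakφ) ?_
  calc I ≤ _ := hweakφ
    _ ≤ _ := ofReal_integral_add_mul_le _ _ _
    _ ≤ _ := add_le_add (hyoung _ (continuous_fracLap _ _))
        (mul_le_mul_right (hyoung _ (continuous_lap _)) _)
    _ = _ := by rw [← hhalf]; ring

/-- A priori capacity estimate for weak solutions to
`(-Δ)^{α/2} u + λ Δu ≥ |u|^{p(x)}`: there is a constant `C > 0` depending only on
`p⁻`, `p⁺` and `λ` such that for every positive `φ ∈ H²(ℝ^N)`,
`∫ |u|^{p(x)} φ ≤ C (∫ φ^{-1/(p(x)-1)} |(-Δ)^{α/2}φ|^{p(x)/(p(x)-1)}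
  + |λ| ∫ φ^{-1/(p(x)-1)} |Δφ|^{p(x)/(p(x)-1)})` (in `[0,∞]`). -/
theorem weak_solution_capacity_bound
    (N : ℕ) (hN : 1 ≤ N) (α : ℝ) (hα : α ∈ Set.Ioo (0 : ℝ) 2) (lam : ℝ)
    (p : EuclideanSpace ℝ (Fin N) → ℝ) (hpmeas : Measurable p)
    (pminus pplus : ℝ) (hp1 : 1 < pminus)
    (hpbd : ∀ᵐ x : EuclideanSpace ℝ (Fin N) ∂(volume : Measure (EuclideanSpace ℝ (Fin N))),
      pminus ≤ p x ∧ p x ≤ pplus)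
    (u : EuclideanSpace ℝ (Fin N) → ℝ)
    (hu2 : MemLp u 2 (volume : Measure (EuclideanSpace ℝ (Fin N))))
    (hup : ∃ μ₀ : ℝ, 0 < μ₀ ∧
      (∫⁻ x : EuclideanSpace ℝ (Fin N), ENNReal.ofReal (|u x / μ₀| ^ (2 * p x))) < ⊤)
    (hweak : ∀ φ : EuclideanSpace ℝ (Fin N) → ℝ, memH2 φ → (∀ x, 0 ≤ φ x) →
      (∫⁻ x : EuclideanSpace ℝ (Fin N), ENNReal.ofReal (|u x| ^ (p x) * φ x)) ≤
        ENNReal.ofReal ((∫ x : EuclideanSpace ℝ (Fin N), u x * fracLap (α / 2) φ x) +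
          lam * ∫ x : EuclideanSpace ℝ (Fin N), u x * lap φ x)) :
    ∃ C : ℝ, 0 < C ∧
      ∀ φ : EuclideanSpace ℝ (Fin N) → ℝ, memH2 φ → (∀ x, 0 < φ x) →
        (∫⁻ x : EuclideanSpace ℝ (Fin N), ENNReal.ofReal (|u x| ^ (p x) * φ x)) ≤
          ENNReal.ofReal C *
            ((∫⁻ x : EuclideanSpace ℝ (Fin N), ENNReal.ofReal
                (φ x ^ (-1 / (p x - 1)) * |fracLap (α / 2) φ x| ^ (p x / (p x - 1)))) +
              ENNReal.ofReal |lam| *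
              (∫⁻ x : EuclideanSpace ℝ (Fin N), ENNReal.ofReal
                (φ x ^ (-1 / (p x - 1)) * |lap φ x| ^ (p x / (p x - 1))))) :=
  weak_solution_capacity_bound_general N α lam p hpmeas pminus pplus hp1 hpbd u hweak
end

section
/- Let N ≥ 1 and let p: ℝ^N → (1,∞) be measurable with 1 < p⁻ ≤ p(x) ≤ p⁺ < ∞ for a.e. x. Let u, g be measurable functions on ℝ^N and let φ be a measurable function with φ(x) > 0 for a.e. x. Set X = ∫_{ℝ^N} |u(x)|^{p(x)} φ(x) dx, F⁺ = ∫_{ℝ^N} φ(x)^{−1/(p⁺−1)} |g(x)|^{p⁺/(p⁺−1)} dx, and F⁻ = ∫_{ℝ^N} φ(x)^{−1/(p⁻−1)} |g(x)|^{p⁻/(p⁻−1)} dx. Then ∫_{ℝ^N} |u(x)||g(x)| dx ≤ (F⁺)^{(p⁺−1)/p⁺} X^{1/p⁺} + (F⁻)^{(p⁻−1)/p⁻} X^{1/p⁻}, where the inequality is understood in the extended reals [0,∞]. -/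
/-!
On `{|u| < 1}` one has `|u|^{p⁺} ≤ |u|^{p(x)}`, and on `{|u| ≥ 1}` one has `|u|^{p⁻} ≤ |u|^{p(x)}`.
On each piece, write `|u| |g| = (|u| φ^{1/r}) (|g| φ^{-1/r})` and apply Hölder's inequality with
exponents `r` and `r / (r - 1)` (`r = p⁺`, resp. `r = p⁻`); the two pieces add up to the claim.
-/

open MeasureTheory

variable {α : Type*} [MeasurableSpace α] {μ : Measure α} {u g φ : α → ℝ} {r : ℝ}

theorem lintegral_ofReal_abs_mul_le_weighted (hu : AEMeasurable u μ) (hg : AEMeasurable g μ)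
    (hφ : AEMeasurable φ μ) (hφpos : ∀ᵐ x ∂μ, 0 < φ x) (hr : 1 < r) :
    ∫⁻ x, ENNReal.ofReal (|u x| * |g x|) ∂μ ≤
      (∫⁻ x, ENNReal.ofReal (φ x ^ (-1 / (r - 1)) * |g x| ^ (r / (r - 1))) ∂μ) ^ ((r - 1) / r) *
        (∫⁻ x, ENNReal.ofReal (|u x| ^ r * φ x) ∂μ) ^ (1 / r) := by
  have hr0 : 0 < r := by linarith
  set r' := r / (r - 1)
  have hconj : r.HolderConjugate r' := Real.HolderConjugate.conjExponent hr
  set F : α → ENNReal := fun x ↦ ENNReal.ofReal (|u x| * φ x ^ (1 / r))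
  set H : α → ENNReal := fun x ↦ ENNReal.ofReal (|g x| * φ x ^ (-(1 / r)))
  have hF : AEMeasurable F μ := (hu.abs.mul (hφ.pow aemeasurable_const)).ennreal_ofReal
  have hH : AEMeasurable H μ := (hg.abs.mul (hφ.pow aemeasurable_const)).ennreal_ofReal
  have h_split : ∀ᵐ x ∂μ, ENNReal.ofReal (|u x| * |g x|) = (F * H) x := by
    filter_upwards [hφpos] with x hx
    have h_cancel : φ x ^ (1 / r) * φ x ^ (-(1 / r)) = 1 := by
      rw [← Real.rpow_add hx, add_neg_cancel, Real.rpow_zero]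
    rw [Pi.mul_apply, ← ENNReal.ofReal_mul (by positivity)]
    congr 1
    linear_combination (|u x| * |g x|) * h_cancel.symm
  have hF_pow : ∀ᵐ x ∂μ, F x ^ r = ENNReal.ofReal (|u x| ^ r * φ x) := by
    filter_upwards [hφpos] with x hx
    rw [ENNReal.ofReal_rpow_of_nonneg (by positivity) hr0.le,
      Real.mul_rpow (abs_nonneg _) (by positivity), ← Real.rpow_mul hx.le,
      one_div_mul_cancel hr0.ne', Real.rpow_one]
  have hH_pow : ∀ᵐ x ∂μ, H x ^ r' = ENNReal.ofReal (φ x ^ (-1 / (r - 1)) * |g x| ^ r') := by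
    filter_upwards [hφpos] with x hx
    have h_exp : -(1 / r) * r' = -1 / (r - 1) := by
      simp only [r']
      field_simp [hr0.ne', (sub_pos.2 hr).ne']
    rw [ENNReal.ofReal_rpow_of_nonneg (by positivity) hconj.symm.nonneg,
      Real.mul_rpow (abs_nonneg _) (by positivity), ← Real.rpow_mul hx.le, h_exp, mul_comm]
  calc ∫⁻ x, ENNReal.ofReal (|u x| * |g x|) ∂μ
      = ∫⁻ x, (F * H) x ∂μ := lintegral_congr_ae h_split
    _ ≤ (∫⁻ x, F x ^ r ∂μ) ^ (1 / r) * (∫⁻ x, H x ^ r' ∂μ) ^ (1 / r') :=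
        ENNReal.lintegral_mul_le_Lp_mul_Lq μ hconj hF hH
    _ = _ := by
        rw [lintegral_congr_ae hF_pow, lintegral_congr_ae hH_pow, one_div_div, mul_comm]

theorem setLIntegral_ofReal_abs_mul_le_weighted {p : α → ℝ} {S : Set α}
    (hu : AEMeasurable u μ) (hg : AEMeasurable g μ) (hφ : AEMeasurable φ μ)
    (hφpos : ∀ᵐ x ∂μ, 0 < φ x) (hr : 1 < r)
    (hpow : ∀ᵐ x ∂μ.restrict S, |u x| ^ r ≤ |u x| ^ p x) :
    ∫⁻ x in S, ENNReal.ofReal (|u x| * |g x|) ∂μ ≤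
      (∫⁻ x, ENNReal.ofReal (φ x ^ (-1 / (r - 1)) * |g x| ^ (r / (r - 1))) ∂μ) ^ ((r - 1) / r) *
        (∫⁻ x, ENNReal.ofReal (|u x| ^ p x * φ x) ∂μ) ^ (1 / r) := by
  have hr0 : 0 < r := by linarith
  have hφpos_S : ∀ᵐ x ∂μ.restrict S, 0 < φ x := ae_restrict_of_ae hφpos
  refine (lintegral_ofReal_abs_mul_le_weighted hu.restrict hg.restrict hφ.restrict hφpos_S hr).trans
    (mul_le_mul' (ENNReal.rpow_le_rpow (setLIntegral_le_lintegral S _)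
      (div_nonneg (by linarith) hr0.le)) (ENNReal.rpow_le_rpow ?_ (by positivity)))
  refine (lintegral_mono_ae ?_).trans (setLIntegral_le_lintegral S _)
  filter_upwards [hφpos_S, hpow] with x hx hx_pow
  exact ENNReal.ofReal_le_ofReal (mul_le_mul_of_nonneg_right hx_pow hx.le)

theorem holder_splitting_general
    (N : ℕ)
    (p : EuclideanSpace ℝ (Fin N) → ℝ)
    (pminus pplus : ℝ) (hp1 : 1 < pminus)
    (hpbd : ∀ᵐ x : EuclideanSpace ℝ (Fin N) ∂(volume : Measure (EuclideanSpace ℝ (Fin N))),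
      pminus ≤ p x ∧ p x ≤ pplus)
    (u g φ : EuclideanSpace ℝ (Fin N) → ℝ)
    (hu : Measurable u) (hg : Measurable g) (hφ : Measurable φ)
    (hφpos : ∀ᵐ x : EuclideanSpace ℝ (Fin N) ∂(volume : Measure (EuclideanSpace ℝ (Fin N))),
      0 < φ x) :
    (∫⁻ x : EuclideanSpace ℝ (Fin N), ENNReal.ofReal (|u x| * |g x|)) ≤
      (∫⁻ x : EuclideanSpace ℝ (Fin N), ENNReal.ofReal
          (φ x ^ (-1 / (pplus - 1)) * |g x| ^ (pplus / (pplus - 1)))) ^ ((pplus - 1) / pplus) *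
        (∫⁻ x : EuclideanSpace ℝ (Fin N),
          ENNReal.ofReal (|u x| ^ (p x) * φ x)) ^ (1 / pplus) +
      (∫⁻ x : EuclideanSpace ℝ (Fin N), ENNReal.ofReal
          (φ x ^ (-1 / (pminus - 1)) * |g x| ^ (pminus / (pminus - 1)))) ^ ((pminus - 1) / pminus) *
        (∫⁻ x : EuclideanSpace ℝ (Fin N),
          ENNReal.ofReal (|u x| ^ (p x) * φ x)) ^ (1 / pminus) := by
  have hpplus : 1 < pplus := by
    obtain ⟨x, hx⟩ := hpbd.exists
    linarith [hx.1, hx.2]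
  have hA : MeasurableSet {x | |u x| < 1} := measurableSet_lt hu.abs measurable_const
  rw [← lintegral_add_compl _ hA]
  refine add_le_add (setLIntegral_ofReal_abs_mul_le_weighted hu.aemeasurable hg.aemeasurable
    hφ.aemeasurable hφpos hpplus ?_) (setLIntegral_ofReal_abs_mul_le_weighted hu.aemeasurable
    hg.aemeasurable hφ.aemeasurable hφpos hp1 ?_)
  · filter_upwards [ae_restrict_of_ae hpbd, ae_restrict_mem hA] with x hpx hx
    exact Real.rpow_le_rpow_of_exponent_ge' (abs_nonneg _) (le_of_lt hx) (by linarith [hpx.1]) hpx.2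
  · filter_upwards [ae_restrict_of_ae hpbd, ae_restrict_mem hA.compl] with x hpx hx
    exact Real.rpow_le_rpow_of_exponent_le (not_lt.1 hx) hpx.1

/-- Hölder-splitting inequality in extended reals: with
`X = ∫ |u|^{p(x)} φ`, `F⁺ = ∫ φ^{-1/(p⁺-1)} |g|^{p⁺/(p⁺-1)}`,
`F⁻ = ∫ φ^{-1/(p⁻-1)} |g|^{p⁻/(p⁻-1)}`, one has
`∫ |u||g| ≤ (F⁺)^{(p⁺-1)/p⁺} X^{1/p⁺} + (F⁻)^{(p⁻-1)/p⁻} X^{1/p⁻}`. -/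
theorem holder_splitting
    (N : ℕ) (hN : 1 ≤ N)
    (p : EuclideanSpace ℝ (Fin N) → ℝ) (hpmeas : Measurable p)
    (pminus pplus : ℝ) (hp1 : 1 < pminus)
    (hpbd : ∀ᵐ x : EuclideanSpace ℝ (Fin N) ∂(volume : Measure (EuclideanSpace ℝ (Fin N))),
      pminus ≤ p x ∧ p x ≤ pplus)
    (u g φ : EuclideanSpace ℝ (Fin N) → ℝ)
    (hu : Measurable u) (hg : Measurable g) (hφ : Measurable φ)
    (hφpos : ∀ᵐ x : EuclideanSpace ℝ (Fin N) ∂(volume : Measure (EuclideanSpace ℝ (Fin N))),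
      0 < φ x) :
    (∫⁻ x : EuclideanSpace ℝ (Fin N), ENNReal.ofReal (|u x| * |g x|)) ≤
      (∫⁻ x : EuclideanSpace ℝ (Fin N), ENNReal.ofReal
          (φ x ^ (-1 / (pplus - 1)) * |g x| ^ (pplus / (pplus - 1)))) ^ ((pplus - 1) / pplus) *
        (∫⁻ x : EuclideanSpace ℝ (Fin N),
          ENNReal.ofReal (|u x| ^ (p x) * φ x)) ^ (1 / pplus) +
      (∫⁻ x : EuclideanSpace ℝ (Fin N), ENNReal.ofReal
          (φ x ^ (-1 / (pminus - 1)) * |g x| ^ (pminus / (pminus - 1)))) ^ ((pminus - 1) / pminus) *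
        (∫⁻ x : EuclideanSpace ℝ (Fin N),
          ENNReal.ofReal (|u x| ^ (p x) * φ x)) ^ (1 / pminus) :=
  holder_splitting_general N p pminus pplus hp1 hpbd u g φ hu hg hφ hφpos
end

section
/- Let p⁻, p⁺, q⁻, q⁺ be real numbers with 1 < p⁻ ≤ p⁺ and 1 < q⁻ ≤ q⁺, and let A, B, Ā, B̄ ≥ 0 and X, Y ∈ [0,∞) be real numbers satisfying X ≤ A·Y^{1/q⁺} + B·Y^{1/q⁻} and Y ≤ Ā·X^{1/p⁺} + B̄·X^{1/p⁻}. Then there exists a constant C > 0, depending only on p⁻, p⁺, q⁻, q⁺, such that X ≤ C( (A·Ā^{1/q⁺})^{q⁺p⁺/(q⁺p⁺−1)} + (A·B̄^{1/q⁺})^{q⁺p⁻/(q⁺p⁻−1)} + (B·Ā^{1/q⁻})^{q⁻p⁺/(q⁻p⁺−1)} + (B·B̄^{1/q⁻})^{q⁻p⁻/(q⁻p⁻−1)} ). -/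
/-!
Substituting the bound on `Y` into the bound on `X` and using `(∑ⱼ yⱼ)^{1/q} ≤ ∑ⱼ yⱼ^{1/q}`
gives `X ≤ ∑ᵢⱼ cᵢⱼ X^{1/(qᵢ pⱼ)}`, four terms, each sublinear in `X` since `qᵢ pⱼ > 1`.
One of them is at least `X / 4`, and `X ≤ 4c X^{1/r}` forces `X ≤ (4c)^{r/(r-1)}`; as `r/(r-1)`
decreases in `r`, the factor `4^{r/(r-1)}` is at most `4^{q⁻p⁻/(q⁻p⁻-1)}`.
-/

open Real Finset

lemma Real.rpow_sum_le_sum_rpow {ι : Type*} (s : Finset ι) {f : ι → ℝ} (hf : ∀ i ∈ s, 0 ≤ f i)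
    {m : ℝ} (hm0 : 0 < m) (hm1 : m ≤ 1) : (∑ i ∈ s, f i) ^ m ≤ ∑ i ∈ s, f i ^ m :=
  Finset.le_sum_of_subadditive_on_pred (· ^ m) (0 ≤ ·) (by simp [zero_rpow hm0.ne'])
    (fun _ _ hx hy => rpow_add_le_add_rpow hx hy hm0.le hm1) (fun _ _ => add_nonneg) f hf

lemma div_sub_one_antitoneOn : AntitoneOn (fun x : ℝ => x / (x - 1)) (Set.Ioi 1) := by
  intro x hx y hy hxy
  simp only [Set.mem_Ioi] at hx hy
  rw [div_le_div_iff₀ (by linarith) (by linarith)]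
  nlinarith

section

variable {ι κ : Type*} [Fintype ι] [Fintype κ]

lemma rpow_le_sum_of_le_sum_mul_rpow {X Y q : ℝ} {b p : κ → ℝ} (hX : 0 ≤ X) (hY : 0 ≤ Y)
    (hb : ∀ j, 0 ≤ b j) (hq : 1 ≤ q) (h : Y ≤ ∑ j, b j * X ^ (1 / p j)) :
    Y ^ (1 / q) ≤ ∑ j, b j ^ (1 / q) * X ^ (1 / (q * p j)) := by
  have hq0 : 0 < 1 / q := by positivity
  calc Y ^ (1 / q) ≤ (∑ j, b j * X ^ (1 / p j)) ^ (1 / q) := rpow_le_rpow hY h hq0.le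
    _ ≤ ∑ j, (b j * X ^ (1 / p j)) ^ (1 / q) :=
      rpow_sum_le_sum_rpow _ (fun j _ => by have := hb j; positivity) hq0
        (div_le_one_of_le₀ hq (by positivity))
    _ = ∑ j, b j ^ (1 / q) * X ^ (1 / (q * p j)) := by
      refine sum_congr rfl fun j _ => ?_
      rw [mul_rpow (hb j) (by positivity), ← rpow_mul hX, one_div_mul_one_div, mul_comm (p j)]

lemma le_sum_prod_mul_rpow_of_le_sum_mul_rpow {X Y : ℝ} {a q : ι → ℝ} {b p : κ → ℝ}
    (hX : 0 ≤ X) (hY : 0 ≤ Y) (ha : ∀ i, 0 ≤ a i) (hb : ∀ j, 0 ≤ b j) (hq : ∀ i, 1 ≤ q i)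
    (hXY : X ≤ ∑ i, a i * Y ^ (1 / q i)) (hYX : Y ≤ ∑ j, b j * X ^ (1 / p j)) :
    X ≤ ∑ ij : ι × κ,
      a ij.1 * b ij.2 ^ (1 / q ij.1) * X ^ (1 / (q ij.1 * p ij.2)) := by
  calc X ≤ ∑ i, a i * Y ^ (1 / q i) := hXY
    _ ≤ ∑ i, a i * ∑ j, b j ^ (1 / q i) * X ^ (1 / (q i * p j)) :=
      sum_le_sum fun i _ => mul_le_mul_of_nonneg_left
        (rpow_le_sum_of_le_sum_mul_rpow hX hY hb (hq i) hYX) (ha i)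
    _ = _ := by simp only [Fintype.sum_prod_type, mul_sum, mul_assoc]

lemma le_rpow_of_le_mul_rpow_one_div {X c r : ℝ} (hX : 0 ≤ X) (hc : 0 ≤ c) (hr : 1 < r)
    (h : X ≤ c * X ^ (1 / r)) : X ≤ c ^ (r / (r - 1)) := by
  rcases hX.eq_or_lt with rfl | hX
  · positivity
  have hr0 : 0 < r - 1 := by linarith
  have hsplit : X ^ ((r - 1) / r) * X ^ (1 / r) = X := by
    rw [← rpow_add hX, ← add_div, sub_add_cancel, div_self (by linarith), rpow_one]
  have hpow : X ^ ((r - 1) / r) ≤ c :=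
    le_of_mul_le_mul_right (hsplit.trans_le h) (rpow_pos_of_pos hX _)
  calc X = (X ^ ((r - 1) / r)) ^ (r / (r - 1)) := by
        rw [← rpow_mul hX.le, div_mul_div_comm, mul_comm, div_self (by positivity), rpow_one]
    _ ≤ c ^ (r / (r - 1)) := rpow_le_rpow (by positivity) hpow (by positivity)

lemma le_mul_sum_rpow_of_le_sum_mul_rpow {X r₀ : ℝ} {c r : ι → ℝ} (hX : 0 ≤ X)
    (hc : ∀ i, 0 ≤ c i) (hr₀ : 1 < r₀) (hr : ∀ i, r₀ ≤ r i) (h : X ≤ ∑ i, c i * X ^ (1 / r i)) :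
    X ≤ (Fintype.card ι : ℝ) ^ (r₀ / (r₀ - 1)) * ∑ i, c i ^ (r i / (r i - 1)) := by
  rcases isEmpty_or_nonempty ι with hι | hι
  · simpa using h
  set n : ℝ := (Fintype.card ι : ℝ)
  have hn : 1 ≤ n := Nat.one_le_cast.mpr Fintype.card_pos
  obtain ⟨i, -, hi⟩ := exists_le_of_sum_le univ_nonempty
    (f := fun _ => X / n) (g := fun i => c i * X ^ (1 / r i)) (by
      simpa [n, sum_const, card_univ, nsmul_eq_mul, mul_div_cancel₀ _ (by positivity : n ≠ 0)]
        using h)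
  have hXi : X ≤ n * c i * X ^ (1 / r i) := by
    rw [mul_assoc, ← div_le_iff₀' (by positivity)]; exact hi
  have hri : 1 < r i := hr₀.trans_le (hr i)
  have hci : 0 ≤ c i ^ (r i / (r i - 1)) := rpow_nonneg (hc i) _
  calc X ≤ (n * c i) ^ (r i / (r i - 1)) :=
        le_rpow_of_le_mul_rpow_one_div hX (by have := hc i; positivity) hri hXi
    _ = n ^ (r i / (r i - 1)) * c i ^ (r i / (r i - 1)) := mul_rpow (by positivity) (hc i)
    _ ≤ n ^ (r₀ / (r₀ - 1)) * c i ^ (r i / (r i - 1)) := mul_le_mul_of_nonneg_right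
        (rpow_le_rpow_of_exponent_le hn (div_sub_one_antitoneOn hr₀ hri (hr i))) hci
    _ ≤ _ := mul_le_mul_of_nonneg_left
        (single_le_sum (f := fun i => c i ^ (r i / (r i - 1)))
          (fun j _ => rpow_nonneg (hc j) _) (mem_univ i)) (by positivity)

end

/-- Iteration lemma for the nonlinear capacity method for systems: if
`X ≤ A Y^{1/q⁺} + B Y^{1/q⁻}` and `Y ≤ Ā X^{1/p⁺} + B̄ X^{1/p⁻}`, then
`X ≤ C((A Ā^{1/q⁺})^{q⁺p⁺/(q⁺p⁺-1)} + (A B̄^{1/q⁺})^{q⁺p⁻/(q⁺p⁻-1)} +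
(B Ā^{1/q⁻})^{q⁻p⁺/(q⁻p⁺-1)} + (B B̄^{1/q⁻})^{q⁻p⁻/(q⁻p⁻-1)})`
for a constant `C > 0` depending only on `p⁻, p⁺, q⁻, q⁺`. -/
theorem iteration_lemma
    (pminus pplus qminus qplus : ℝ)
    (hp1 : 1 < pminus) (hp2 : pminus ≤ pplus)
    (hq1 : 1 < qminus) (hq2 : qminus ≤ qplus) :
    ∃ C : ℝ, 0 < C ∧
      ∀ A B Abar Bbar X Y : ℝ,
        0 ≤ A → 0 ≤ B → 0 ≤ Abar → 0 ≤ Bbar → 0 ≤ X → 0 ≤ Y →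
        X ≤ A * Y ^ (1 / qplus) + B * Y ^ (1 / qminus) →
        Y ≤ Abar * X ^ (1 / pplus) + Bbar * X ^ (1 / pminus) →
        X ≤ C * ((A * Abar ^ (1 / qplus)) ^ (qplus * pplus / (qplus * pplus - 1)) +
          (A * Bbar ^ (1 / qplus)) ^ (qplus * pminus / (qplus * pminus - 1)) +
          (B * Abar ^ (1 / qminus)) ^ (qminus * pplus / (qminus * pplus - 1)) +
          (B * Bbar ^ (1 / qminus)) ^ (qminus * pminus / (qminus * pminus - 1))) := by
  set q : Fin 2 → ℝ := ![qplus, qminus]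
  set p : Fin 2 → ℝ := ![pplus, pminus]
  have hq : ∀ i, qminus ≤ q i := by simp [Fin.forall_fin_two, q, hq2]
  have hp : ∀ j, pminus ≤ p j := by simp [Fin.forall_fin_two, p, hp2]
  have hqp : ∀ ij : Fin 2 × Fin 2, qminus * pminus ≤ q ij.1 * p ij.2 := fun ⟨i, j⟩ =>
    mul_le_mul (hq i) (hp j) (by linarith) (by linarith [hq i])
  refine ⟨4 ^ (qminus * pminus / (qminus * pminus - 1)), by positivity,
    fun A B Abar Bbar X Y hA hB hAbar hBbar hX hY hXY hYX => ?_⟩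
  set a : Fin 2 → ℝ := ![A, B]
  set b : Fin 2 → ℝ := ![Abar, Bbar]
  have ha : ∀ i, 0 ≤ a i := by simp [Fin.forall_fin_two, a, hA, hB]
  have hb : ∀ j, 0 ≤ b j := by simp [Fin.forall_fin_two, b, hAbar, hBbar]
  have hcomposed := le_sum_prod_mul_rpow_of_le_sum_mul_rpow (q := q) (p := p) hX hY ha hb
    (fun i => hq1.le.trans (hq i)) (by simpa [Fin.sum_univ_two, a, q] using hXY)
    (by simpa [Fin.sum_univ_two, b, p] using hYX)
  have habsorbed := le_mul_sum_rpow_of_le_sum_mul_rpow hX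
    (fun ij => mul_nonneg (ha ij.1) (rpow_nonneg (hb ij.2) _)) (by nlinarith) hqp hcomposed
  norm_num [Fintype.sum_prod_type, Fin.sum_univ_two, a, b, p, q] at habsorbed
  simpa only [one_div, add_assoc] using habsorbed
end

section
/- Let N ≥ 3 be an integer and let p > N/(N−2) be a real number. Then there exists ε₀ > 0 such that for every ε ∈ (0, ε₀], the function u(x) = ε(1+|x|²)^{1/(1−p)} on ℝ^N is smooth, positive, and satisfies −Δu(x) ≥ u(x)^p for all x ∈ ℝ^N, where Δ denotes the classical Laplacian (the sum of second partial derivatives). -/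
/-- The classical Laplacian on `ℝ^N`: the sum of the second partial derivatives. -/
noncomputable def classicalLaplacian {N : ℕ} (f : EuclideanSpace ℝ (Fin N) → ℝ)
    (x : EuclideanSpace ℝ (Fin N)) : ℝ :=
  ∑ i : Fin N,
    fderiv ℝ (fun y => fderiv ℝ f y (EuclideanSpace.single i (1 : ℝ))) x
      (EuclideanSpace.single i (1 : ℝ))

section Aux

variable {N : ℕ}

lemma one_add_normSq_pos (y : EuclideanSpace ℝ (Fin N)) : 0 < 1 + ‖y‖ ^ 2 := by positivity

lemma hasFDerivAt_aux (α : ℝ) (y : EuclideanSpace ℝ (Fin N)) :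
    HasFDerivAt (fun z : EuclideanSpace ℝ (Fin N) => (1 + ‖z‖ ^ 2) ^ α)
      ((α * (1 + ‖y‖ ^ 2) ^ (α - 1)) • (2 • (innerSL ℝ y))) y := by
  have h0 : HasFDerivAt (fun z : EuclideanSpace ℝ (Fin N) => 1 + ‖z‖ ^ 2)
      (2 • (innerSL ℝ y)) y := (hasStrictFDerivAt_norm_sq y).hasFDerivAt.const_add 1
  exact h0.rpow_const (Or.inl (one_add_normSq_pos y).ne')

lemma fderiv_u_apply (ε α : ℝ) (y v : EuclideanSpace ℝ (Fin N)) :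
    fderiv ℝ (fun z : EuclideanSpace ℝ (Fin N) => ε * (1 + ‖z‖ ^ 2) ^ α) y v
      = (2 * ε * α) * ((1 + ‖y‖ ^ 2) ^ (α - 1) * (inner ℝ y v : ℝ)) := by
  rw [((hasFDerivAt_aux α y).const_mul ε).fderiv]
  simp [two_smul]
  ring

lemma second_deriv (ε α : ℝ) (x : EuclideanSpace ℝ (Fin N)) (i : Fin N) :
    fderiv ℝ (fun y : EuclideanSpace ℝ (Fin N) =>
        fderiv ℝ (fun z : EuclideanSpace ℝ (Fin N) => ε * (1 + ‖z‖ ^ 2) ^ α) y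
          (EuclideanSpace.single i (1 : ℝ))) x (EuclideanSpace.single i (1 : ℝ))
    = (2 * ε * α) * ((α - 1) * (1 + ‖x‖ ^ 2) ^ (α - 2) * (2 * (x i * x i))
        + (1 + ‖x‖ ^ 2) ^ (α - 1)) := by
  have hfun : (fun y : EuclideanSpace ℝ (Fin N) =>
      fderiv ℝ (fun z : EuclideanSpace ℝ (Fin N) => ε * (1 + ‖z‖ ^ 2) ^ α) y
        (EuclideanSpace.single i (1 : ℝ)))
      = fun y => (2 * ε * α) * ((1 + ‖y‖ ^ 2) ^ (α - 1) * y i) := by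
    funext y
    rw [fderiv_u_apply]
    simp [EuclideanSpace.inner_single_right]
  rw [hfun]
  have h1 := hasFDerivAt_aux (N := N) (α - 1) x
  have h2 : HasFDerivAt (fun y : EuclideanSpace ℝ (Fin N) => y i)
      (EuclideanSpace.proj (𝕜 := ℝ) i) x := by
    have := (EuclideanSpace.proj (𝕜 := ℝ) (ι := Fin N) i).hasFDerivAt (x := x)
    convert this using 1
    rfl
  have h3 := ((h1.mul h2).const_mul (2 * ε * α)).fderiv
  rw [show (fun y : EuclideanSpace ℝ (Fin N) => 2 * ε * α * ((1 + ‖y‖ ^ 2) ^ (α - 1) * y i)) = (fun y => 2 * ε * α * (((fun z : EuclideanSpace ℝ (Fin N) => (1 + ‖z‖ ^ 2) ^ (α - 1)) * fun y : EuclideanSpace ℝ (Fin N) => y i : EuclideanSpace ℝ (Fin N) → ℝ) y)) from rfl, h3]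
  simp [two_smul, EuclideanSpace.inner_single_right]
  ring_nf

lemma sum_sq (x : EuclideanSpace ℝ (Fin N)) : ∑ i, x i * x i = ‖x‖ ^ 2 := by
  rw [PiLp.norm_sq_eq_of_L2]
  simp [Real.norm_eq_abs, sq_abs, sq]

lemma laplacian_u (ε α : ℝ) (x : EuclideanSpace ℝ (Fin N)) :
    classicalLaplacian (fun y : EuclideanSpace ℝ (Fin N) => ε * (1 + ‖y‖ ^ 2) ^ α) x
      = (2 * ε * α) * ((α - 1) * (1 + ‖x‖ ^ 2) ^ (α - 2) * (2 * ‖x‖ ^ 2)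
          + (N : ℝ) * (1 + ‖x‖ ^ 2) ^ (α - 1)) := by
  unfold classicalLaplacian
  simp_rw [second_deriv]
  rw [Finset.sum_congr rfl (fun i _ => by ring : ∀ i ∈ Finset.univ, (2 * ε * α) * ((α - 1) * (1 + ‖x‖ ^ 2) ^ (α - 2) * (2 * (x i * x i))
        + (1 + ‖x‖ ^ 2) ^ (α - 1))
      = (2 * ε * α * ((α - 1) * (1 + ‖x‖ ^ 2) ^ (α - 2) * 2)) * (x i * x i)
        + (2 * ε * α) * (1 + ‖x‖ ^ 2) ^ (α - 1))]
  rw [Finset.sum_add_distrib, ← Finset.mul_sum, sum_sq, Finset.sum_const, Finset.card_univ,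
    Fintype.card_fin, nsmul_eq_mul]
  ring

end Aux

/-- Sharpness of the critical exponent `N/(N-2)`: if `N ≥ 3` and `p > N/(N-2)`, then
for all sufficiently small `ε > 0`, `u(x) = ε (1+|x|²)^{1/(1-p)}` is a smooth positive
function satisfying `-Δu ≥ u^p` on `ℝ^N`. -/
theorem supersolution_exists
    (N : ℕ) (hN : 3 ≤ N) (p : ℝ) (hp : (N : ℝ) / ((N : ℝ) - 2) < p) :
    ∃ ε₀ : ℝ, 0 < ε₀ ∧ ∀ ε ∈ Set.Ioc (0 : ℝ) ε₀,
      ContDiff ℝ (⊤ : ℕ∞) (fun x : EuclideanSpace ℝ (Fin N) =>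
        ε * (1 + ‖x‖ ^ 2) ^ (1 / (1 - p))) ∧
      (∀ x : EuclideanSpace ℝ (Fin N), 0 < ε * (1 + ‖x‖ ^ 2) ^ (1 / (1 - p))) ∧
      (∀ x : EuclideanSpace ℝ (Fin N),
        (ε * (1 + ‖x‖ ^ 2) ^ (1 / (1 - p))) ^ p ≤
          -classicalLaplacian
            (fun y : EuclideanSpace ℝ (Fin N) => ε * (1 + ‖y‖ ^ 2) ^ (1 / (1 - p))) x) := by
  set α : ℝ := 1 / (1 - p) with hα_def
  have hN2 : (0 : ℝ) < (N : ℝ) - 2 := by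
    have : (3 : ℝ) ≤ (N : ℝ) := by exact_mod_cast hN
    linarith
  have hNpos : (0 : ℝ) < (N : ℝ) := by linarith
  have hp1 : 1 < p := by
    have h1 : (1 : ℝ) < (N : ℝ) / ((N : ℝ) - 2) := by
      rw [lt_div_iff₀ hN2]; linarith
    linarith
  have h1p : (1 : ℝ) - p ≠ 0 := by linarith
  have hα_neg : α < 0 := by
    rw [hα_def]
    apply div_neg_of_pos_of_neg one_pos
    linarith
  have hα1 : α * (1 - p) = 1 := by
    rw [hα_def]; field_simp
  have hαp : α * p = α - 1 := by linear_combination -hα1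
  -- key positivity from supercriticality
  have hkey : 0 < (N : ℝ) - 2 + 2 * α := by
    have hNlt : (N : ℝ) < p * ((N : ℝ) - 2) := by
      rw [div_lt_iff₀ hN2] at hp; linarith
    -- (N-2+2α)(p-1) = (N-2)(p-1) - 2 > 0
    have hprod : ((N : ℝ) - 2 + 2 * α) * (p - 1) = ((N : ℝ) - 2) * (p - 1) - 2 := by
      linear_combination (-2 : ℝ) * hα1
    have h2 : (2 : ℝ) < ((N : ℝ) - 2) * (p - 1) := by nlinarith
    have hp1' : (0 : ℝ) < p - 1 := by linarith
    nlinarith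
  set c : ℝ := min (N : ℝ) ((N : ℝ) - 2 + 2 * α) with hc_def
  have hc : 0 < c := lt_min hNpos hkey
  set K : ℝ := 2 * (-α) * c with hK_def
  have hK : 0 < K := by
    apply mul_pos (mul_pos two_pos (by linarith)) hc
  refine ⟨K ^ (1 / (p - 1)), Real.rpow_pos_of_pos hK _, ?_⟩
  rintro ε ⟨hε, hεle⟩
  have hεK : ε ^ (p - 1) ≤ K := by
    have h1 : ε ^ (p - 1) ≤ (K ^ (1 / (p - 1))) ^ (p - 1) :=
      Real.rpow_le_rpow hε.le hεle (by linarith)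
    rwa [← Real.rpow_mul hK.le, one_div_mul_cancel (by linarith : p - 1 ≠ 0),
      Real.rpow_one] at h1
  refine ⟨?_, ?_, ?_⟩
  · exact contDiff_const.mul
      ((contDiff_const.add (contDiff_norm_sq ℝ)).rpow_const_of_ne
        fun x => (one_add_normSq_pos x).ne')
  · intro x
    exact mul_pos hε (Real.rpow_pos_of_pos (one_add_normSq_pos x) _)
  · intro x
    rw [laplacian_u]
    have ht : 0 < 1 + ‖x‖ ^ 2 := one_add_normSq_pos x
    have hs : 0 ≤ ‖x‖ ^ 2 := by positivity
    set t : ℝ := 1 + ‖x‖ ^ 2 with ht_def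
    set T2 : ℝ := t ^ (α - 2) with hT2_def
    have hT2 : 0 ≤ T2 := Real.rpow_nonneg ht.le _
    have hT1 : t ^ (α - 1) = T2 * t := by
      rw [hT2_def, ← Real.rpow_add_one ht.ne' (α - 2)]
      congr 1
      ring
    -- LHS = ε^p * t^(α-1)
    have hLHS : (ε * t ^ α) ^ p = ε ^ p * t ^ (α - 1) := by
      rw [Real.mul_rpow hε.le (Real.rpow_nonneg ht.le _), ← Real.rpow_mul ht.le,
        mul_comm α p, mul_comm p α, hαp]
    rw [hLHS]
    -- ε^p ≤ K * ε
    have hεp : ε ^ p ≤ K * ε := by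
      have : ε ^ p = ε ^ (p - 1) * ε := by
        rw [show p = (p - 1) + 1 by ring, Real.rpow_add_one hε.ne']
        ring_nf
      rw [this]
      exact mul_le_mul_of_nonneg_right hεK hε.le
    have hbase : c * t ≤ (N : ℝ) + ((N : ℝ) - 2 + 2 * α) * ‖x‖ ^ 2 := by
      have h1 : c ≤ (N : ℝ) := min_le_left _ _
      have h2 : c ≤ (N : ℝ) - 2 + 2 * α := min_le_right _ _
      rw [ht_def]
      nlinarith
    have hpos : 0 ≤ 2 * ε * (-α) * T2 := by
      have : 0 ≤ -α := by linarith
      positivity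
    calc ε ^ p * t ^ (α - 1) ≤ (K * ε) * t ^ (α - 1) :=
          mul_le_mul_of_nonneg_right hεp (Real.rpow_nonneg ht.le _)
      _ = (2 * ε * (-α) * T2) * (c * t) := by rw [hT1, hK_def]; ring
      _ ≤ (2 * ε * (-α) * T2) * ((N : ℝ) + ((N : ℝ) - 2 + 2 * α) * ‖x‖ ^ 2) :=
          mul_le_mul_of_nonneg_left hbase hpos
      _ = -(2 * ε * α * ((α - 1) * T2 * (2 * ‖x‖ ^ 2) + (N : ℝ) * t ^ (α - 1))) := by
          rw [hT1, ht_def]; ring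
end
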